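/- Let V be a finite set of nodes partitioned by a binary sensitive attribute s : V → {0,1} into nonempty groups S₀ and S₁. Let each node k ∈ V have a nonempty neighborhood N(k) ⊆ V and attention coefficients α_{kj} ≥ 0 for j ∈ N(k) satisfying Σ_{j∈N(k)} α_{kj} = 1. Let c_j ∈ ℝ^{F'} with group means c̄₀, c̄₁, and let z_k = Σ_{j∈N(k)} α_{kj} c_j. Let S^χ be the set of nodes having at least one neighbor of the opposite sensitive group, S₁^χ = S₁ ∩ S^χ, and R₁^χ = |S₁^χ|/|S₁|. Assume ‖c_j − c̄_{s(j)}‖_∞ ≤ Δc for every j ∈ V, and assume there exists α^χ ∈ [0,1] such that for every node k ∈ S^χ, Σ_{j∈N(k), s(j)≠s(k)} α_{kj} = α^χ. Then ‖ (1/|S₁|) Σ_{j∈S₁} z_j − [ R₁^χ ( α^χ c̄₀ + (1−α^χ) c̄₁ ) + (1−R₁^χ) c̄₁ ] ‖_∞ ≤ Δc. -/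

import Mathlib

open Finset

/-- Group mean of vectors over a finite index set. -/
noncomputable def gmean {V : Type*} {d : ℕ} (S : Finset V)
    (x : V → EuclideanSpace ℝ (Fin d)) : EuclideanSpace ℝ (Fin d) :=
  (S.card : ℝ)⁻¹ • ∑ j ∈ S, x j

/-- The sensitive group of nodes with sensitive attribute `t`. -/
def grp {V : Type*} [Fintype V] (s : V → Fin 2) (t : Fin 2) : Finset V :=
  Finset.univ.filter fun j => s j = t

/-!
Coordinatewise, `z_k i` is an `α_k`-weighted average of the `c_j i`, each within `Δc` of the
group mean `c̄_{s(j)} i`, so `z_k i` is within `Δc` of `W_k := Σ_j α_kj c̄_{s(j)} i`. Splitting the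
neighbourhood of `k ∈ S₁` by group, `W_k = α^χ c̄₀ i + (1 - α^χ) c̄₁ i` if `k ∈ S^χ` and `W_k = c̄₁ i`
otherwise. Averaging over `S₁` preserves the `Δc` bound, and the average of the `W_k` is exactly
the `i`-th coordinate of the centre of the band.
-/

section Averages

variable {ι : Type*} {S : Finset ι} {x y : ι → ℝ} {δ : ℝ}

theorem abs_sum_mul_sub_sum_mul_le {w : ι → ℝ} (hw : ∀ j ∈ S, 0 ≤ w j)
    (hw₁ : ∑ j ∈ S, w j = 1) (h : ∀ j ∈ S, |x j - y j| ≤ δ) :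
    |∑ j ∈ S, w j * x j - ∑ j ∈ S, w j * y j| ≤ δ :=
  calc |∑ j ∈ S, w j * x j - ∑ j ∈ S, w j * y j|
      = |∑ j ∈ S, w j * (x j - y j)| := by simp only [mul_sub, sum_sub_distrib]
    _ ≤ ∑ j ∈ S, |w j * (x j - y j)| := abs_sum_le_sum_abs _ _
    _ ≤ ∑ j ∈ S, w j * δ := sum_le_sum fun j hj => by
        rw [abs_mul, abs_of_nonneg (hw j hj)]
        exact mul_le_mul_of_nonneg_left (h j hj) (hw j hj)
    _ = δ := by rw [← sum_mul, hw₁, one_mul]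

theorem abs_inv_card_mul_sum_sub_le (hS : S.Nonempty) (h : ∀ j ∈ S, |x j - y j| ≤ δ) :
    |(#S : ℝ)⁻¹ * ∑ j ∈ S, x j - (#S : ℝ)⁻¹ * ∑ j ∈ S, y j| ≤ δ := by
  simp only [mul_sum]
  refine abs_sum_mul_sub_sum_mul_le (fun _ _ => by positivity) ?_ h
  rw [sum_const, nsmul_eq_mul, mul_inv_cancel₀]
  exact_mod_cast hS.card_pos.ne'

theorem inv_card_mul_sum_ite_mem [DecidableEq ι] (hS : S.Nonempty) (T : Finset ι) (u v : ℝ) :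
    (#S : ℝ)⁻¹ * ∑ k ∈ S, (if k ∈ T then u else v)
      = (#(S ∩ T) : ℝ) / #S * u + (1 - (#(S ∩ T) : ℝ) / #S) * v := by
  have hcard : (#{k ∈ S | k ∉ T} : ℝ) = #S - #(S ∩ T) := by
    rw [eq_sub_iff_add_eq', ← filter_mem_eq_inter]
    exact_mod_cast card_filter_add_card_filter_not (· ∈ T)
  have hcard_ne : (#S : ℝ) ≠ 0 := by exact_mod_cast hS.card_pos.ne'
  rw [sum_ite, sum_const, sum_const, filter_mem_eq_inter, nsmul_eq_mul, nsmul_eq_mul, hcard]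
  field_simp

end Averages

theorem sum_mul_comp_eq_of_fin_two {ι : Type*} {S : Finset ι} {w : ι → ℝ} (hw₁ : ∑ j ∈ S, w j = 1)
    {s : ι → Fin 2} {t : Fin 2} {ρ : ℝ} (hρ : ∑ j ∈ S with s j ≠ t, w j = ρ) (m : Fin 2 → ℝ) :
    ∑ j ∈ S, w j * m (s j) = ρ * m t.rev + (1 - ρ) * m t := by
  subst hρ
  have hrest : ∑ j ∈ S with ¬s j ≠ t, w j = 1 - ∑ j ∈ S with s j ≠ t, w j := by
    rw [← hw₁, ← sum_filter_add_sum_filter_not S (s · ≠ t)]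
    ring
  rw [← sum_filter_add_sum_filter_not S (s · ≠ t), ← hrest, sum_mul, sum_mul]
  congr 1 <;> refine sum_congr rfl fun j hj => ?_ <;> rw [mem_filter] at hj
  · rw [show s j = t.rev by have := Fin.val_rev t; omega]
  · rw [not_not.mp hj.2]

theorem gmean_apply {V : Type*} {d : ℕ} (S : Finset V) (x : V → EuclideanSpace ℝ (Fin d))
    (i : Fin d) : gmean S x i = (#S : ℝ)⁻¹ * ∑ j ∈ S, x j i := by
  simp only [gmean, PiLp.smul_apply, WithLp.ofLp_sum, Finset.sum_apply, smul_eq_mul]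

theorem aggregated_group_mean_band_general
    {V : Type*} [Fintype V] [DecidableEq V] {F' : ℕ}
    (s : V → Fin 2)
    (hS₁ : (grp s 1).Nonempty)
    (N : V → Finset V)
    (α : V → V → ℝ) (hαnn : ∀ k, ∀ j ∈ N k, 0 ≤ α k j)
    (hαsum : ∀ k, ∑ j ∈ N k, α k j = 1)
    (c : V → EuclideanSpace ℝ (Fin F'))
    (z : V → EuclideanSpace ℝ (Fin F')) (hz : ∀ k, z k = ∑ j ∈ N k, α k j • c j)
    (Δc : ℝ)
    (hΔc : ∀ j, ∀ i, |c j i - gmean (grp s (s j)) c i| ≤ Δc)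
    (Sχ : Finset V) (hSχ : ∀ k, k ∈ Sχ ↔ ∃ j ∈ N k, s j ≠ s k)
    (αχ : ℝ)
    (hA2 : ∀ k ∈ Sχ, ∑ j ∈ (N k).filter (fun j => s j ≠ s k), α k j = αχ) :
    ∀ i, |gmean (grp s 1) z i
        - ((((grp s 1 ∩ Sχ).card : ℝ) / ((grp s 1).card : ℝ)) •
              (αχ • gmean (grp s 0) c + (1 - αχ) • gmean (grp s 1) c)
            + (1 - ((grp s 1 ∩ Sχ).card : ℝ) / ((grp s 1).card : ℝ)) •
              gmean (grp s 1) c) i| ≤ Δc := by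
  intro i
  set m : Fin 2 → ℝ := fun t => gmean (grp s t) c i
  set W : V → ℝ := fun k => if k ∈ Sχ then αχ * m 0 + (1 - αχ) * m 1 else m 1
  have hW : ∀ k ∈ grp s 1, ∑ j ∈ N k, α k j * m (s j) = W k := by
    intro k hk
    have hsk : s k = 1 := (mem_filter.mp hk).2
    by_cases hkχ : k ∈ Sχ
    · rw [sum_mul_comp_eq_of_fin_two (hαsum k) (hA2 k hkχ), hsk]
      simp only [W, if_pos hkχ]
      rfl
    · have hnone : ∑ j ∈ N k with s j ≠ s k, α k j = 0 :=
        sum_eq_zero fun j hj => absurd ((hSχ k).mpr ⟨j, mem_filter.mp hj⟩) hkχ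
      rw [sum_mul_comp_eq_of_fin_two (hαsum k) hnone, hsk]
      simp only [W, if_neg hkχ]
      ring
  have hnode : ∀ k ∈ grp s 1, |z k i - W k| ≤ Δc := fun k hk => by
    rw [hz, ← hW k hk]
    simp only [WithLp.ofLp_sum, WithLp.ofLp_smul, Finset.sum_apply, Pi.smul_apply, smul_eq_mul]
    exact abs_sum_mul_sub_sum_mul_le (hαnn k) (hαsum k) fun j _ => hΔc j i
  have hcentre : ((((grp s 1 ∩ Sχ).card : ℝ) / ((grp s 1).card : ℝ)) •
        (αχ • gmean (grp s 0) c + (1 - αχ) • gmean (grp s 1) c)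
      + (1 - ((grp s 1 ∩ Sχ).card : ℝ) / ((grp s 1).card : ℝ)) • gmean (grp s 1) c) i
      = (#(grp s 1) : ℝ)⁻¹ * ∑ k ∈ grp s 1, W k := by
    rw [inv_card_mul_sum_ite_mem hS₁]
    simp only [PiLp.add_apply, PiLp.smul_apply, smul_eq_mul, m]
  rw [gmean_apply, hcentre]
  exact abs_inv_card_mul_sum_sub_le hS₁ hnode

/-- Equation (22) in the appendix: the group mean over `S₁` of the attention-aggregated
representations lies within an `∞`-norm band of width `Δc` around the convex combination
`R₁^χ (α^χ c̄₀ + (1 - α^χ) c̄₁) + (1 - R₁^χ) c̄₁` of the group means of the `c_j`. -/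
theorem aggregated_group_mean_band
    {V : Type*} [Fintype V] [DecidableEq V] {F' : ℕ}
    (s : V → Fin 2)
    (hS₀ : (grp s 0).Nonempty) (hS₁ : (grp s 1).Nonempty)
    (N : V → Finset V) (hN : ∀ k, (N k).Nonempty)
    (α : V → V → ℝ) (hαnn : ∀ k, ∀ j ∈ N k, 0 ≤ α k j)
    (hαsum : ∀ k, ∑ j ∈ N k, α k j = 1)
    (c : V → EuclideanSpace ℝ (Fin F'))
    (z : V → EuclideanSpace ℝ (Fin F')) (hz : ∀ k, z k = ∑ j ∈ N k, α k j • c j)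
    (Δc : ℝ)
    (hΔc : ∀ j, ∀ i, |c j i - gmean (grp s (s j)) c i| ≤ Δc)
    (Sχ : Finset V) (hSχ : ∀ k, k ∈ Sχ ↔ ∃ j ∈ N k, s j ≠ s k)
    (αχ : ℝ) (hαχ0 : 0 ≤ αχ) (hαχ1 : αχ ≤ 1)
    (hA2 : ∀ k ∈ Sχ, ∑ j ∈ (N k).filter (fun j => s j ≠ s k), α k j = αχ) :
    ∀ i, |gmean (grp s 1) z i
        - ((((grp s 1 ∩ Sχ).card : ℝ) / ((grp s 1).card : ℝ)) •
              (αχ • gmean (grp s 0) c + (1 - αχ) • gmean (grp s 1) c)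
            + (1 - ((grp s 1 ∩ Sχ).card : ℝ) / ((grp s 1).card : ℝ)) •
              gmean (grp s 1) c) i| ≤ Δc :=
  aggregated_group_mean_band_general s hS₁ N α hαnn hαsum c z hz Δc hΔc Sχ hSχ αχ hA2
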